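/- Let φ be a simplicial orientation-reversing pairwise gluing of the faces of the geometric octahedron O ⊂ ℝ³, let X(φ) be the quotient space and π : O → X(φ) the quotient projection. Then the restriction of π to the relative interior of each edge of O is injective. -/
import Mathlib


/-- The faces of the octahedron, indexed by sign vectors `ε ∈ {±1}³`. -/
abbrev OctFace : Type := Fin 3 → ℤˣ

/-- The cyclic ordering of the corners of a face induced by a fixed orientation of the
octahedron: the 3-cycle `(0 1 2)` if `ε₁ε₂ε₃ = 1`, and its inverse otherwise. -/
noncomputable def faceCycle (f : OctFace) : Equiv.Perm (Fin 3) :=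
  if f 0 * f 1 * f 2 = 1 then finRotate 3 else (finRotate 3)⁻¹

/-- A simplicial orientation-reversing pairwise gluing `φ = (m, b)` of the faces of the
octahedron, encoded combinatorially: `m` is the fixed-point-free involution pairing the
faces and `b f` is the vertex bijection of the affine homeomorphism `g_f : F_f → F_{m f}`,
subject to `b (m f) = (b f)⁻¹` (i.e. `g_{m f} = g_f⁻¹`) and to the orientation-reversing
condition `b f ∘ c f ∘ (b f)⁻¹ = (c (m f))⁻¹`. -/
structure OctGluing : Type where
  m : OctFace → OctFace
  b : OctFace → Equiv.Perm (Fin 3)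
  m_invol : ∀ f, m (m f) = f
  m_fpf : ∀ f, m f ≠ f
  b_inv : ∀ f, b (m f) = (b f)⁻¹
  orient : ∀ f, b f * faceCycle f * (b f)⁻¹ = (faceCycle (m f))⁻¹

/-- Points of `ℝ³`. -/
abbrev Pt : Type := Fin 3 → ℝ

/-- The vertex `s·eᵢ` of the octahedron. -/
noncomputable def octVertexPt (i : Fin 3) (s : ℤˣ) : Pt :=
  Pi.single i ((s : ℤ) : ℝ)

/-- The geometric octahedron `O ⊂ ℝ³`: the convex hull of `{±e₁, ±e₂, ±e₃}`. -/
def OctSolid : Set Pt :=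
  convexHull ℝ {p : Pt | ∃ i s, p = octVertexPt i s}

/-- The face `F_ε = conv{ε₁e₁, ε₂e₂, ε₃e₃}` of the octahedron. -/
def octFaceSet (f : OctFace) : Set Pt :=
  convexHull ℝ {p : Pt | ∃ i, p = octVertexPt i (f i)}

/-- The affine homeomorphism `g_f : F_f → F_{m f}` determined by the gluing `φ`: the
unique affine map sending the vertex `(f i)·eᵢ` to the vertex `((m f) (b f i))·e_{b f i}`
for each corner `i`. -/
noncomputable def glueMap (φ : OctGluing) (f : OctFace) (x : Pt) : Pt :=
  fun j => (((φ.m f j : ℤ) : ℝ)) * (((f ((φ.b f)⁻¹ j) : ℤ) : ℝ)) * x ((φ.b f)⁻¹ j)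

/-- The identifications `x ∼ g_f (x)` for `x ∈ F_f`, on the points of the octahedron. -/
def octGlueRel (φ : OctGluing) : ↥OctSolid → ↥OctSolid → Prop :=
  fun x y => ∃ f : OctFace, (x : Pt) ∈ octFaceSet f ∧ (y : Pt) = glueMap φ f (x : Pt)


/-! Combinatorial state space -/

abbrev ZSt : Type := Fin 3 × Fin 3 × OctFace

def flipO (i j : Fin 3) (h : OctFace) : OctFace :=
  fun l => if l = i ∨ l = j then h l else -(h l)

def iotaHat (z : ZSt) : ZSt := (z.1, z.2.1, flipO z.1 z.2.1 z.2.2)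

def uHat (φ : OctGluing) (z : ZSt) : ZSt := (φ.b z.2.2 z.1, φ.b z.2.2 z.2.1, φ.m z.2.2)

def rhoSt (z : ZSt) : ZSt := (z.2.1, z.1, z.2.2)

def appB (φ : OctGluing) (g : Bool) (z : ZSt) : ZSt := cond g (iotaHat z) (uHat φ z)

def actL (φ : OctGluing) : List Bool → ZSt → ZSt
  | [], z => z
  | g :: l, z => appB φ g (actL φ l z)

def altL : Bool → ℕ → List Bool
  | _, 0 => []
  | g, n+1 => g :: altL (!g) n

def validZ (z : ZSt) : Prop := z.1 ≠ z.2.1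

lemma flipO_comm (i j : Fin 3) (h : OctFace) : flipO j i h = flipO i j h := by
  funext l; simp [flipO, or_comm]

lemma flipO_flipO (i j : Fin 3) (h : OctFace) : flipO i j (flipO i j h) = h := by
  funext l; simp only [flipO]; by_cases hl : l = i ∨ l = j <;> simp [hl]

lemma flipO_apply_left (i j : Fin 3) (h : OctFace) : flipO i j h i = h i := by
  simp [flipO]

lemma flipO_apply_right (i j : Fin 3) (h : OctFace) : flipO i j h j = h j := by
  simp [flipO]

lemma iotaHat_invol (z : ZSt) : iotaHat (iotaHat z) = z := by
  cases z with
  | mk i z' => cases z' with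
    | mk j h => simp [iotaHat, flipO_flipO]

lemma uHat_invol (φ : OctGluing) (z : ZSt) : uHat φ (uHat φ z) = z := by
  obtain ⟨i, j, h⟩ := z
  simp [uHat, φ.m_invol, φ.b_inv]

lemma rho_iotaHat (z : ZSt) : rhoSt (iotaHat z) = iotaHat (rhoSt z) := by
  obtain ⟨i, j, h⟩ := z
  simp [rhoSt, iotaHat, flipO_comm]

lemma rho_uHat (φ : OctGluing) (z : ZSt) : rhoSt (uHat φ z) = uHat φ (rhoSt z) := by
  obtain ⟨i, j, h⟩ := z; rfl

lemma appB_invol (φ : OctGluing) (g : Bool) (z : ZSt) : appB φ g (appB φ g z) = z := by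
  cases g <;> simp [appB, iotaHat_invol, uHat_invol]

lemma rho_appB (φ : OctGluing) (g : Bool) (z : ZSt) :
    rhoSt (appB φ g z) = appB φ g (rhoSt z) := by
  cases g <;> simp [appB, rho_iotaHat, rho_uHat]

lemma validZ_appB (φ : OctGluing) (g : Bool) (z : ZSt) (hv : validZ z) :
    validZ (appB φ g z) := by
  obtain ⟨i, j, h⟩ := z
  cases g
  · simpa [appB, uHat, validZ] using fun e => hv ((φ.b h).injective e)
  · exact hv

lemma validZ_act (φ : OctGluing) (l : List Bool) (z : ZSt) (hv : validZ z) :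
    validZ (actL φ l z) := by
  induction l with
  | nil => exact hv
  | cons g l ih => exact validZ_appB φ g _ ih

/-! σ invariant -/

def sigmaP (z : ZSt) : Prop := z.2.1 = faceCycle z.2.2 z.1

lemma rot_dichotomy : ∀ x y : Fin 3, x ≠ y → (y = finRotate 3 x ↔ ¬ y = (finRotate 3)⁻¹ x) := by
  decide

lemma cyc_dichotomy (h : OctFace) (x y : Fin 3) (hxy : x ≠ y) :
    y = faceCycle h x ↔ ¬ y = (faceCycle h)⁻¹ x := by
  unfold faceCycle
  by_cases hp : h 0 * h 1 * h 2 = 1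
  · simp only [hp, if_pos]; exact rot_dichotomy x y hxy
  · simp only [hp, if_neg, not_false_iff, inv_inv]
    exact iff_not_comm.mp (rot_dichotomy x y hxy)

lemma cyc_dichotomy' (h : OctFace) (x y : Fin 3) (hxy : x ≠ y) :
    y = (faceCycle h)⁻¹ x ↔ ¬ y = faceCycle h x :=
  iff_not_comm.mp (cyc_dichotomy h x y hxy)

lemma prod_flip {a b c a' b' c' : ℤˣ}
    (h : (a' = -a ∧ b' = b ∧ c' = c) ∨ (a' = a ∧ b' = -b ∧ c' = c) ∨
      (a' = a ∧ b' = b ∧ c' = -c)) :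
    a' * b' * c' = -(a * b * c) := by
  rcases h with ⟨h1, h2, h3⟩ | ⟨h1, h2, h3⟩ | ⟨h1, h2, h3⟩ <;> subst h1 <;> subst h2 <;>
    subst h3 <;> simp [neg_mul, mul_neg]

lemma third_exists : ∀ i j : Fin 3, i ≠ j →
    ∃ k, ¬(k = i ∨ k = j) ∧ ∀ l : Fin 3, l = i ∨ l = j ∨ l = k := by decide

lemma fin3_cases : ∀ k : Fin 3, k = 0 ∨ k = 1 ∨ k = 2 := by decide

lemma flipO_prod (i j : Fin 3) (hij : i ≠ j) (h : OctFace) :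
    flipO i j h 0 * flipO i j h 1 * flipO i j h 2 = -(h 0 * h 1 * h 2) := by
  obtain ⟨k, hk, hall⟩ := third_exists i j hij
  have hval : ∀ l : Fin 3, (l = k ∧ flipO i j h l = -(h l)) ∨ (l ≠ k ∧ flipO i j h l = h l) := by
    intro l
    rcases hall l with hl | hl | hl
    · right
      refine ⟨?_, by simp [flipO, hl]⟩
      rintro rfl; exact hk (Or.inl hl)
    · right
      refine ⟨?_, by simp [flipO, hl]⟩
      rintro rfl; exact hk (Or.inr hl)
    · subst hl
      exact Or.inl ⟨rfl, by simp [flipO, hk]⟩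
  apply prod_flip
  rcases hval 0 with ⟨h0, e0⟩ | ⟨h0, e0⟩ <;> rcases hval 1 with ⟨h1, e1⟩ | ⟨h1, e1⟩ <;>
    rcases hval 2 with ⟨h2, e2⟩ | ⟨h2, e2⟩
  · exact absurd (h0.trans h1.symm) (by decide)
  · exact absurd (h0.trans h1.symm) (by decide)
  · exact absurd (h0.trans h2.symm) (by decide)
  · exact Or.inl ⟨e0, e1, e2⟩
  · exact absurd (h1.trans h2.symm) (by decide)
  · exact Or.inr (Or.inl ⟨e0, e1, e2⟩)
  · exact Or.inr (Or.inr ⟨e0, e1, e2⟩)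
  · exfalso
    rcases fin3_cases k with rfl | rfl | rfl
    · exact h0 rfl
    · exact h1 rfl
    · exact h2 rfl

lemma neg_one_ne_one : (-1 : ℤˣ) ≠ 1 := by decide

lemma faceCycle_flipO (i j : Fin 3) (hij : i ≠ j) (h : OctFace) :
    faceCycle (flipO i j h) = (faceCycle h)⁻¹ := by
  unfold faceCycle
  rw [flipO_prod i j hij h]
  rcases Int.units_eq_one_or (h 0 * h 1 * h 2) with hp | hp <;> rw [hp] <;> simp [neg_one_ne_one]

lemma sigmaP_iotaHat (z : ZSt) (hv : validZ z) : sigmaP (iotaHat z) ↔ ¬ sigmaP z := by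
  obtain ⟨i, j, h⟩ := z
  have hij : i ≠ j := hv
  simp only [sigmaP, iotaHat]
  rw [faceCycle_flipO i j hij h]
  exact cyc_dichotomy' h i j hij

lemma sigmaP_uHat (φ : OctGluing) (z : ZSt) (hv : validZ z) :
    sigmaP (uHat φ z) ↔ ¬ sigmaP z := by
  obtain ⟨i, j, h⟩ := z
  have hij : i ≠ j := hv
  simp only [sigmaP, uHat]
  have horient : faceCycle (φ.m h) = φ.b h * (faceCycle h)⁻¹ * (φ.b h)⁻¹ := by
    have h2 : faceCycle (φ.m h) = (φ.b h * faceCycle h * (φ.b h)⁻¹)⁻¹ := by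
      rw [φ.orient h, inv_inv]
    rw [h2]
    group
  rw [horient]
  have happ : (φ.b h * (faceCycle h)⁻¹ * (φ.b h)⁻¹) (φ.b h i) = φ.b h ((faceCycle h)⁻¹ i) := by
    simp [Equiv.Perm.mul_apply]
  rw [happ, Equiv.apply_eq_iff_eq]
  exact cyc_dichotomy' h i j hij

lemma sigmaP_rho (z : ZSt) (hv : validZ z) : sigmaP (rhoSt z) ↔ ¬ sigmaP z := by
  obtain ⟨i, j, h⟩ := z
  have hij : i ≠ j := hv
  simp only [sigmaP, rhoSt]
  have hiff : i = faceCycle h j ↔ j = (faceCycle h)⁻¹ i := by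
    constructor
    · intro e; rw [e]; simp
    · intro e; rw [e]; simp
  rw [hiff]
  exact cyc_dichotomy' h i j hij

lemma sigmaP_appB (φ : OctGluing) (g : Bool) (z : ZSt) (hv : validZ z) :
    sigmaP (appB φ g z) ↔ ¬ sigmaP z := by
  cases g
  · exact sigmaP_uHat φ z hv
  · exact sigmaP_iotaHat z hv

/-! Word machinery and the no-flip lemma -/

def stepZ (φ : OctGluing) (a b : ZSt) : Prop := b = iotaHat a ∨ b = uHat φ a

lemma altL_length (g : Bool) (n : ℕ) : (altL g n).length = n := by
  induction n generalizing g with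
  | zero => rfl
  | succ n ih => simp [altL, ih]

lemma actL_append (φ : OctGluing) (l₁ l₂ : List Bool) (z : ZSt) :
    actL φ (l₁ ++ l₂) z = actL φ l₁ (actL φ l₂ z) := by
  induction l₁ with
  | nil => rfl
  | cons g l ih => simp [actL, ih]

def lastB (g : Bool) (n : ℕ) : Bool := if n % 2 = 0 then g else !g

lemma lastB_not (g : Bool) (n : ℕ) : lastB (!g) n = lastB g (n+1) := by
  rcases Nat.even_or_odd n with he | ho
  · have h1 : n % 2 = 0 := Nat.even_iff.mp he
    have h2 : (n+1) % 2 = 1 := by omega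
    simp [lastB, h1, h2]
  · have h1 : n % 2 = 1 := Nat.odd_iff.mp ho
    have h2 : (n+1) % 2 = 0 := by omega
    simp [lastB, h1, h2]

lemma altL_snoc (g : Bool) (n : ℕ) : altL g (n+1) = altL g n ++ [lastB g n] := by
  induction n generalizing g with
  | zero => simp [altL, lastB]
  | succ n ih =>
    show g :: altL (!g) (n+1) = (g :: altL (!g) n) ++ _
    rw [ih (!g), lastB_not]
    simp

lemma sigmaP_actL (φ : OctGluing) (l : List Bool) (z : ZSt) (hv : validZ z) :
    sigmaP (actL φ l z) ↔ (Even l.length ↔ sigmaP z) := by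
  induction l with
  | nil => simp [actL]
  | cons g l ih =>
    have hv' : validZ (actL φ l z) := validZ_act φ l z hv
    show sigmaP (appB φ g _) ↔ _
    rw [sigmaP_appB φ g _ hv', ih]
    simp only [List.length_cons]
    rw [Nat.even_add_one]
    tauto

lemma odd_no_flip (φ : OctGluing) : ∀ k (g : Bool) (z : ZSt), validZ z →
    actL φ (altL g (2*k+1)) z ≠ rhoSt z := by
  intro k
  induction k with
  | zero =>
    intro g z hv heq
    have : appB φ g z = rhoSt z := heq
    obtain ⟨i, j, h⟩ := z
    have hij : i ≠ j := hv
    cases g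
    · -- uHat
      have h3 := congrArg (fun w => w.2.2) this
      exact φ.m_fpf h h3
    · -- iotaHat
      have h1 := congrArg (fun w => w.1) this
      exact hij h1
  | succ k ih =>
    intro g z hv heq
    have hsplit : altL g (2*(k+1)+1) = (g :: altL (!g) (2*k+1)) ++ [g] := by
      have e1 : 2*(k+1)+1 = (2*k+2)+1 := by ring
      rw [e1, altL_snoc g (2*k+2)]
      have : lastB g (2*k+2) = g := by simp [lastB, Nat.mul_add_mod]
      rw [this]
      rfl
    rw [hsplit, actL_append] at heq
    have heq2 : appB φ g (actL φ (altL (!g) (2*k+1)) (actL φ [g] z)) = rhoSt z := heq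
    have heq3 : actL φ (altL (!g) (2*k+1)) (appB φ g z) = appB φ g (rhoSt z) := by
      have := congrArg (appB φ g) heq2
      rw [appB_invol] at this
      exact this
    rw [← rho_appB] at heq3
    exact ih (!g) (appB φ g z) (validZ_appB φ g z hv) heq3

lemma reach_canon (φ : OctGluing) (z w : ZSt)
    (h : Relation.ReflTransGen (stepZ φ) z w) :
    ∃ g n, w = actL φ (altL g n) z := by
  induction h with
  | refl => exact ⟨true, 0, rfl⟩
  | @tail w' w hr hstep ih =>
    obtain ⟨g, n, rfl⟩ := ih
    have : ∃ g' : Bool, w = appB φ g' (actL φ (altL g n) z) := by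
      rcases hstep with h | h
      · exact ⟨true, h⟩
      · exact ⟨false, h⟩
    obtain ⟨g', rfl⟩ := this
    cases n with
    | zero => exact ⟨g', 1, rfl⟩
    | succ n =>
      by_cases hg : g' = g
      · subst hg
        refine ⟨!g', n, ?_⟩
        show appB φ g' (actL φ (altL g' (n+1)) z) = _
        have : altL g' (n+1) = g' :: altL (!g') n := rfl
        rw [this]
        show appB φ g' (appB φ g' (actL φ (altL (!g') n) z)) = _
        rw [appB_invol]
      · have hgg : g = !g' := by
          cases g <;> cases g' <;> simp_all
        refine ⟨g', n+2, ?_⟩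
        subst hgg
        rfl

lemma no_flip (φ : OctGluing) (z : ZSt) (hv : validZ z) :
    ¬ Relation.ReflTransGen (stepZ φ) z (rhoSt z) := by
  intro h
  obtain ⟨g, n, heq⟩ := reach_canon φ z _ h
  have h1 : sigmaP (actL φ (altL g n) z) ↔ (Even n ↔ sigmaP z) := by
    have := sigmaP_actL φ (altL g n) z hv
    rwa [altL_length] at this
  rw [← heq, sigmaP_rho z hv] at h1
  rcases Nat.even_or_odd n with he | ho
  · tauto
  · obtain ⟨k, rfl⟩ := ho
    exact odd_no_flip φ k g z hv heq.symm

/-! Geometry lemmas -/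

noncomputable def ptE (i j : Fin 3) (h : OctFace) (u : ℝ) : Pt :=
  fun l => (if l = i then (1-u) * ((h i : ℤ) : ℝ) else 0) + (if l = j then u * ((h j : ℤ) : ℝ) else 0)

lemma unit_cast_mul_self (c : ℤˣ) : ((c : ℤ) : ℝ) * ((c : ℤ) : ℝ) = 1 := by
  rcases Int.units_eq_one_or c with h | h <;> norm_num [h]

lemma unit_cast_ne_zero (c : ℤˣ) : ((c : ℤ) : ℝ) ≠ 0 := by
  rcases Int.units_eq_one_or c with h | h <;> norm_num [h]

lemma ptE_eq_comb (i j : Fin 3) (h : OctFace) (u : ℝ) :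
    ptE i j h u = (1-u) • octVertexPt i (h i) + u • octVertexPt j (h j) := by
  funext l
  simp only [ptE, octVertexPt, Pi.add_apply, Pi.smul_apply, Pi.single_apply, smul_eq_mul,
    mul_ite, mul_zero]

lemma ptE_congr (i j : Fin 3) (h f : OctFace) (u : ℝ) (h1 : f i = h i) (h2 : f j = h j) :
    ptE i j h u = ptE i j f u := by
  funext l; simp only [ptE, h1, h2]

lemma mem_octFaceSet (i j : Fin 3) (h f : OctFace) (u : ℝ)
    (h1 : f i = h i) (h2 : f j = h j) (hu0 : 0 ≤ u) (hu1 : u ≤ 1) :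
    ptE i j h u ∈ octFaceSet f := by
  rw [ptE_congr i j h f u h1 h2, ptE_eq_comb]
  have hvi : octVertexPt i (f i) ∈ {p : Pt | ∃ l, p = octVertexPt l (f l)} := ⟨i, rfl⟩
  have hvj : octVertexPt j (f j) ∈ {p : Pt | ∃ l, p = octVertexPt l (f l)} := ⟨j, rfl⟩
  exact (convex_convexHull ℝ _) (subset_convexHull ℝ _ hvi) (subset_convexHull ℝ _ hvj)
    (by linarith) hu0 (by ring)

lemma octFaceSet_coord_nonneg (f : OctFace) (x : Pt) (hx : x ∈ octFaceSet f) (l : Fin 3) :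
    0 ≤ ((f l : ℤ) : ℝ) * x l := by
  have hconv : Convex ℝ {w : Pt | 0 ≤ ((f l : ℤ) : ℝ) * w l} := by
    refine convex_halfSpace_ge ?_ 0
    constructor
    · intro a b; simp [mul_add]
    · intro c a; simp [Pi.smul_apply, smul_eq_mul]; ring
  have hsub : {p : Pt | ∃ m, p = octVertexPt m (f m)} ⊆ {w : Pt | 0 ≤ ((f l : ℤ) : ℝ) * w l} := by
    rintro p ⟨m, rfl⟩
    simp only [Set.mem_setOf_eq, octVertexPt, Pi.single_apply]
    by_cases hml : l = m
    · subst hml; simp only [if_pos rfl]; exact mul_self_nonneg _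
    · simp [hml]
  exact convexHull_min hsub hconv hx

lemma sign_determination {a b : ℝ} {c d : ℤˣ} (ha : 0 < a) (hab : a * ((c : ℤ) : ℝ) = b * ((d : ℤ) : ℝ)) (hb : 0 < b) : c = d ∧ a = b := by
  rcases Int.units_eq_one_or c with hc | hc <;> rcases Int.units_eq_one_or d with hd | hd <;>
    subst hc <;> subst hd <;> norm_num at hab ⊢ <;> first | (exact hab) | linarith

lemma unit_sign_nonneg {c d : ℤˣ} {a : ℝ} (ha : 0 < a)
    (h : 0 ≤ ((c : ℤ) : ℝ) * (a * ((d : ℤ) : ℝ))) : c = d := by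
  rcases Int.units_eq_one_or c with hc | hc <;> rcases Int.units_eq_one_or d with hd | hd <;>
    subst hc <;> subst hd <;> norm_num at h ⊢ <;> linarith

lemma face_force (i j : Fin 3) (hij : i ≠ j) (h f : OctFace) (u : ℝ) (hu0 : 0 < u) (hu1 : u < 1)
    (hmem : ptE i j h u ∈ octFaceSet f) : f i = h i ∧ f j = h j := by
  constructor
  · have := octFaceSet_coord_nonneg f _ hmem i
    have hcoord : ptE i j h u i = (1-u) * ((h i : ℤ) : ℝ) := by
      simp [ptE, hij, Ne.symm hij]
    rw [hcoord] at this
    exact unit_sign_nonneg (by linarith) this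
  · have := octFaceSet_coord_nonneg f _ hmem j
    have hcoord : ptE i j h u j = u * ((h j : ℤ) : ℝ) := by
      simp [ptE, hij, Ne.symm hij]
    rw [hcoord] at this
    exact unit_sign_nonneg hu0 this

lemma glueMap_linear (φ : OctGluing) (f : OctFace) : IsLinearMap ℝ (glueMap φ f) := by
  constructor
  · intro a b; funext l; simp [glueMap, Pi.add_apply]; ring
  · intro c a; funext l; simp [glueMap, Pi.smul_apply, smul_eq_mul]; ring

lemma glueMap_vertex (φ : OctGluing) (f : OctFace) (l : Fin 3) :
    glueMap φ f (octVertexPt l (f l)) = octVertexPt (φ.b f l) (φ.m f (φ.b f l)) := by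
  funext k
  simp only [glueMap, octVertexPt, Pi.single_apply]
  by_cases hk : k = φ.b f l
  · subst hk
    rw [if_pos rfl, if_pos (by simp)]
    have : (φ.b f)⁻¹ (φ.b f l) = l := by simp
    rw [this]
    rw [mul_assoc, unit_cast_mul_self, mul_one]
  · have hne : (φ.b f)⁻¹ k ≠ l := by
      intro hfl
      apply hk
      rw [← hfl]
      simp
    rw [if_neg hne, if_neg hk]
    ring
lemma glueMap_ptE (φ : OctGluing) (f : OctFace) (i j : Fin 3) (hij : i ≠ j) (u : ℝ) :
    glueMap φ f (ptE i j f u) = ptE (φ.b f i) (φ.b f j) (φ.m f) u := by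
  have hbij : φ.b f i ≠ φ.b f j := fun e => hij ((φ.b f).injective e)
  funext l
  simp only [glueMap, ptE]
  by_cases hl1 : l = φ.b f i
  · subst hl1
    have e1 : (φ.b f)⁻¹ (φ.b f i) = i := by simp
    rw [e1, if_pos rfl, if_pos rfl, if_neg hij, if_neg hbij]
    rw [add_zero, add_zero, mul_assoc, ← mul_assoc (((f i : ℤ) : ℝ)), mul_comm (((f i : ℤ) : ℝ)) ((1-u)), mul_assoc ((1-u)), unit_cast_mul_self]
    ring
  · by_cases hl2 : l = φ.b f j
    · subst hl2
      have e1 : (φ.b f)⁻¹ (φ.b f j) = j := by simp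
      rw [e1, if_neg (Ne.symm hij), if_pos rfl, if_neg (Ne.symm hbij), if_pos rfl]
      rw [zero_add, zero_add, mul_assoc, ← mul_assoc (((f j : ℤ) : ℝ)), mul_comm (((f j : ℤ) : ℝ)) u, mul_assoc u, unit_cast_mul_self]
      ring
    · have e1 : (φ.b f)⁻¹ l ≠ i := by
        intro e; apply hl1; rw [← e]; simp
      have e2 : (φ.b f)⁻¹ l ≠ j := by
        intro e; apply hl2; rw [← e]; simp
      rw [if_neg e1, if_neg e2, if_neg hl1, if_neg hl2]
      ring

lemma glueMap_mem_face (φ : OctGluing) (f : OctFace) (x : Pt) (hx : x ∈ octFaceSet f) :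
    glueMap φ f x ∈ octFaceSet (φ.m f) := by
  have hsub : {p : Pt | ∃ l, p = octVertexPt l (f l)} ⊆
      glueMap φ f ⁻¹' (octFaceSet (φ.m f)) := by
    rintro p ⟨l, rfl⟩
    simp only [Set.mem_preimage]
    rw [glueMap_vertex]
    exact subset_convexHull ℝ _ ⟨φ.b f l, rfl⟩
  have hconv : Convex ℝ (glueMap φ f ⁻¹' (octFaceSet (φ.m f))) :=
    (convex_convexHull ℝ _).is_linear_preimage (glueMap_linear φ f)
  exact convexHull_min hsub hconv hx

lemma glueMap_glueMap (φ : OctGluing) (f : OctFace) (x : Pt) :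
    glueMap φ (φ.m f) (glueMap φ f x) = x := by
  funext l
  simp only [glueMap, φ.m_invol, φ.b_inv, inv_inv]
  have e1 : (φ.b f)⁻¹ (φ.b f l) = l := by simp
  rw [e1]
  have h1 := unit_cast_mul_self (f l)
  have h2 := unit_cast_mul_self (φ.m f (φ.b f l))
  linear_combination (((φ.m f (φ.b f l) : ℤ) : ℝ) * ((φ.m f (φ.b f l) : ℤ) : ℝ) * (x l)) * h1 + (x l) * h2



lemma ptE_apply_left (i j : Fin 3) (hij : i ≠ j) (h : OctFace) (u : ℝ) :
    ptE i j h u i = (1-u) * ((h i : ℤ) : ℝ) := by simp [ptE, hij]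

lemma ptE_apply_right (i j : Fin 3) (hij : i ≠ j) (h : OctFace) (u : ℝ) :
    ptE i j h u j = u * ((h j : ℤ) : ℝ) := by simp [ptE, Ne.symm hij]

lemma ptE_apply_other (i j : Fin 3) (h : OctFace) (u : ℝ) (l : Fin 3)
    (hli : l ≠ i) (hlj : l ≠ j) : ptE i j h u l = 0 := by simp [ptE, hli, hlj]

/-! Main transport lemma -/

noncomputable def ptZ (z : ZSt) (u : ℝ) : Pt := ptE z.1 z.2.1 z.2.2 u

lemma units_ne_iff_eq_neg {a b : ℤˣ} (h : a ≠ b) : a = -b := by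
  rcases Int.units_eq_one_or a with ha | ha <;> rcases Int.units_eq_one_or b with hb | hb <;>
    subst ha <;> subst hb <;> first | rfl | (exact absurd rfl h) | decide

lemma face_agree (i j : Fin 3) (hij : i ≠ j) (h f : OctFace)
    (h1 : f i = h i) (h2 : f j = h j) : f = h ∨ f = flipO i j h := by
  obtain ⟨k, hk, hall⟩ := third_exists i j hij
  by_cases hfk : f k = h k
  · left
    funext l
    rcases hall l with rfl | rfl | rfl
    · exact h1
    · exact h2
    · exact hfk
  · right
    funext l
    rcases hall l with rfl | rfl | rfl
    · rw [flipO_apply_left]; exact h1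
    · rw [flipO_apply_right]; exact h2
    · have : flipO i j h l = -(h l) := by simp [flipO, hk]
      rw [this]
      exact units_ne_iff_eq_neg hfk

lemma validZ_reach (φ : OctGluing) (z w : ZSt)
    (h : Relation.ReflTransGen (stepZ φ) z w) (hv : validZ z) : validZ w := by
  induction h with
  | refl => exact hv
  | tail _ hstep ih =>
    rcases hstep with h | h <;> rw [h]
    · exact validZ_appB φ true _ ih
    · exact validZ_appB φ false _ ih

lemma reach_to_face (φ : OctGluing) (i j : Fin 3) (hij : i ≠ j) (h f : OctFace)
    (h1 : f i = h i) (h2 : f j = h j) :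
    Relation.ReflTransGen (stepZ φ) (i, j, h) (φ.b f i, φ.b f j, φ.m f) := by
  have hstep : Relation.ReflTransGen (stepZ φ) (i, j, h) (i, j, f) := by
    rcases face_agree i j hij h f h1 h2 with rfl | rfl
    · exact Relation.ReflTransGen.refl
    · exact Relation.ReflTransGen.single (Or.inl rfl)
  exact hstep.tail (Or.inr rfl)

lemma main_transport (φ : OctGluing) (u : ℝ) (hu0 : 0 < u) (hu1 : u < 1)
    (x y : ↥OctSolid) (hxy : Relation.EqvGen (octGlueRel φ) x y) :
    ∀ z : ZSt, validZ z →
      (((x : Pt) = ptZ z u → ∃ z', Relation.ReflTransGen (stepZ φ) z z' ∧ (y : Pt) = ptZ z' u) ∧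
       ((y : Pt) = ptZ z u → ∃ z', Relation.ReflTransGen (stepZ φ) z z' ∧ (x : Pt) = ptZ z' u)) := by
  induction hxy with
  | rel a b hab =>
    obtain ⟨f, haf, hba⟩ := hab
    rintro ⟨i, j, h⟩ hv
    have hij : i ≠ j := hv
    constructor
    · intro hx
      have hx2 : (a : Pt) = ptE i j h u := hx
      have hmem : ptE i j h u ∈ octFaceSet f := by rw [← hx2]; exact haf
      obtain ⟨h1, h2⟩ := face_force i j hij h f u hu0 hu1 hmem
      refine ⟨(φ.b f i, φ.b f j, φ.m f), reach_to_face φ i j hij h f h1 h2, ?_⟩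
      rw [hba, hx]
      show glueMap φ f (ptE i j h u) = ptE (φ.b f i) (φ.b f j) (φ.m f) u
      rw [ptE_congr i j h f u h1 h2]
      exact glueMap_ptE φ f i j hij u
    · intro hy
      have hbmem : (b : Pt) ∈ octFaceSet (φ.m f) := hba ▸ glueMap_mem_face φ f _ haf
      have hy2 : (b : Pt) = ptE i j h u := hy
      have hmem : ptE i j h u ∈ octFaceSet (φ.m f) := by rw [← hy2]; exact hbmem
      obtain ⟨h1, h2⟩ := face_force i j hij h (φ.m f) u hu0 hu1 hmem
      refine ⟨(φ.b (φ.m f) i, φ.b (φ.m f) j, φ.m (φ.m f)),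
        reach_to_face φ i j hij h (φ.m f) h1 h2, ?_⟩
      have hback : (a : Pt) = glueMap φ (φ.m f) (b : Pt) := by
        rw [hba, glueMap_glueMap]
      rw [hback, hy]
      show glueMap φ (φ.m f) (ptE i j h u) = ptE (φ.b (φ.m f) i) (φ.b (φ.m f) j) (φ.m (φ.m f)) u
      rw [ptE_congr i j h (φ.m f) u h1 h2]
      exact glueMap_ptE φ (φ.m f) i j hij u
  | refl a =>
    intro z _
    exact ⟨fun hx => ⟨z, Relation.ReflTransGen.refl, hx⟩,
      fun hx => ⟨z, Relation.ReflTransGen.refl, hx⟩⟩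
  | symm a b _ ih =>
    intro z hv
    exact ⟨(ih z hv).2, (ih z hv).1⟩
  | trans a b c _ _ ih1 ih2 =>
    intro z hv
    constructor
    · intro hx
      obtain ⟨z1, hr1, hb1⟩ := (ih1 z hv).1 hx
      obtain ⟨z2, hr2, hc2⟩ := (ih2 z1 (validZ_reach φ z z1 hr1 hv)).1 hb1
      exact ⟨z2, hr1.trans hr2, hc2⟩
    · intro hc
      obtain ⟨z1, hr1, hb1⟩ := (ih2 z hv).2 hc
      obtain ⟨z2, hr2, ha2⟩ := (ih1 z1 (validZ_reach φ z z1 hr1 hv)).2 hb1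
      exact ⟨z2, hr1.trans hr2, ha2⟩


/-- for any simplicial orientation-reversing pairwise gluing `φ` of the
faces of the geometric octahedron, the projection `π : O → X(φ)` to the quotient space
is injective on the relative interior (the open segment) of each edge of `O`. -/
theorem quotient_injective_on_open_edges (φ : OctGluing)
    (i j : Fin 3) (hij : i ≠ j) (s t : ℤˣ)
    (x y : ↥OctSolid)
    (hx : (x : Pt) ∈ openSegment ℝ (octVertexPt i s) (octVertexPt j t))
    (hy : (y : Pt) ∈ openSegment ℝ (octVertexPt i s) (octVertexPt j t))
    (hπ : Quot.mk (octGlueRel φ) x = Quot.mk (octGlueRel φ) y) :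
    x = y := by
    classical
  -- the reference face
  set h₀ : OctFace := (fun l => if l = i then s else if l = j then t else 1) with hh₀
  have hs : h₀ i = s := by simp [hh₀]
  have ht : h₀ j = t := by simp [hh₀, Ne.symm hij]
  obtain ⟨ax, bx, hax, hbx, habx, hxval⟩ := hx
  obtain ⟨ay, by', hay, hby, haby, hyval⟩ := hy
  have hbx1 : bx < 1 := by linarith
  have hby1 : by' < 1 := by linarith
  have hxpt : (x : Pt) = ptE i j h₀ bx := by
    rw [← hxval, ptE_eq_comb, hs, ht]
    have : ax = 1 - bx := by linarith
    rw [this]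
  have hypt : (y : Pt) = ptE i j h₀ by' := by
    rw [← hyval, ptE_eq_comb, hs, ht]
    have : ay = 1 - by' := by linarith
    rw [this]
  have hEG : Relation.EqvGen (octGlueRel φ) x y := Quot.eq.1 hπ
  have hvz : validZ (i, j, h₀) := hij
  obtain ⟨z', hreach, hy'⟩ :=
    (main_transport φ bx hbx hbx1 x y hEG (i, j, h₀) hvz).1 hxpt
  obtain ⟨i', j', h'⟩ := z'
  have hij' : i' ≠ j' := validZ_reach φ _ _ hreach hvz
  have hy2 : (y : Pt) = ptE i' j' h' bx := hy'
  have hE : ptE i' j' h' bx = ptE i j h₀ by' := hy2.symm.trans hypt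
  have hine : i = i' ∨ i = j' := by
    by_contra hcon
    push_neg at hcon
    have h0 : ptE i' j' h' bx i = 0 := ptE_apply_other i' j' h' bx i hcon.1 hcon.2
    have hci := congrFun hE i
    rw [h0, ptE_apply_left i j hij h₀ by', hs] at hci
    rcases mul_eq_zero.mp hci.symm with hq | hq
    · linarith
    · exact unit_cast_ne_zero s hq
  have hjne : j = i' ∨ j = j' := by
    by_contra hcon
    push_neg at hcon
    have h0 : ptE i' j' h' bx j = 0 := ptE_apply_other i' j' h' bx j hcon.1 hcon.2
    have hcj := congrFun hE j
    rw [h0, ptE_apply_right i j hij h₀ by', ht] at hcj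
    rcases mul_eq_zero.mp hcj.symm with hq | hq
    · linarith
    · exact unit_cast_ne_zero t hq
  rcases hine with hii | hij2 <;> rcases hjne with hji | hjj
  · exact absurd (hii.trans hji.symm) hij
  · -- i' = i, j' = j : same orientation, conclude x = y
    subst hii; subst hjj
    have e1 := congrFun hE i
    rw [ptE_apply_left i j hij h' bx, ptE_apply_left i j hij h₀ by', hs] at e1
    obtain ⟨hsi, hab⟩ := sign_determination (by linarith : (0:ℝ) < 1 - bx) e1 (by linarith)
    have e2 := congrFun hE j
    rw [ptE_apply_right i j hij h' bx, ptE_apply_right i j hij h₀ by', ht] at e2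
    obtain ⟨htj, _⟩ := sign_determination hbx e2 hby
    have hbb : bx = by' := by linarith
    apply Subtype.ext
    rw [hxpt, hypt, hbb]
  · -- i = j', j = i' : reversed orientation, contradiction
    exfalso
    subst hij2; subst hji
    have e1 := congrFun hE j
    rw [ptE_apply_left j i (Ne.symm hij) h' bx, ptE_apply_right i j hij h₀ by', ht] at e1
    obtain ⟨htj, hab1⟩ := sign_determination (by linarith : (0:ℝ) < 1 - bx) e1 hby
    have e2 := congrFun hE i
    rw [ptE_apply_right j i (Ne.symm hij) h' bx, ptE_apply_left i j hij h₀ by', hs] at e2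
    obtain ⟨hsi, hab2⟩ := sign_determination hbx e2 (by linarith : (0:ℝ) < 1 - by')
    have hfa := face_agree i j hij h₀ h' (hs.trans hsi.symm).symm (ht.trans htj.symm).symm
    rcases hfa with rfl | rfl
    · exact no_flip φ (i, j, h₀) hij hreach
    · have hstep2 : Relation.ReflTransGen (stepZ φ) (i, j, h₀)
          (iotaHat (j, i, flipO i j h₀)) := hreach.tail (Or.inl rfl)
      have hconv : iotaHat (j, i, flipO i j h₀) = rhoSt (i, j, h₀) := by
        show (j, i, flipO j i (flipO i j h₀)) = (j, i, h₀)
        rw [flipO_comm, flipO_flipO]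
      rw [hconv] at hstep2
      exact no_flip φ (i, j, h₀) hij hstep2
  · exact absurd (hij2.trans hjj.symm) hij
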